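/- arXiv:2304.03104 — 6 statements merged into one kernel-verified Lean document; each statement's English description precedes it below -/
import Mathlib

section
/- Existence of an effective supervisor: let 𝓛 ⊆ List A be a nonempty prefix-closed language and let Π_𝓛 be the effective supervisor for 𝓛, i.e., Π_𝓛(l) = { a | l ++ [a] ∈ 𝓛 }. Then any set K ⊆ List A satisfying the supervised-language recursion for Π_𝓛 (namely [] ∈ K, and for all l and a, l ++ [a] ∈ K ↔ (l ∈ K ∧ a ∈ Π_𝓛(l))) is equal to 𝓛. -/
/-- Existence of an effective supervisor: for a nonempty
prefix-closed language 𝓛, any supervised language for the effective supervisor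
Π_𝓛(l) = { a | l ++ [a] ∈ 𝓛 } equals 𝓛. -/
theorem effective_supervisor_exists
    {A : Type*} [Fintype A] [Nonempty A]
    (𝓛 : Set (List A)) (hne : 𝓛.Nonempty)
    (hpc : ∀ l ∈ 𝓛, ∀ p : List A, p <+: l → p ∈ 𝓛)
    (K : Set (List A))
    (hKnil : [] ∈ K)
    (hKrec : ∀ (l : List A) (a : A),
      l ++ [a] ∈ K ↔ (l ∈ K ∧ a ∈ {b : A | l ++ [b] ∈ 𝓛})) :
    K = 𝓛 := by
  have hnil𝓛 : ([] : List A) ∈ 𝓛 := by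
    obtain ⟨w, hw⟩ := hne
    exact hpc w hw [] ⟨w, rfl⟩
  ext l
  induction l using List.reverseRecOn with
  | nil => simpa using ⟨fun _ => hnil𝓛, fun _ => hKnil⟩
  | append_singleton l a ih =>
    rw [hKrec l a]
    constructor
    · exact fun ⟨_, h⟩ => h
    · intro h
      exact ⟨ih.mpr (hpc _ h l ⟨[a], rfl⟩), h⟩
end

section
/- Realization of the supervisor by an automaton (generated language): let H be a specification automaton whose generated language L(H) = { l | δ_h*(h₀, l) ≠ none } equals a prefix-closed language 𝓛, and let Π_𝓛(l) = { a | l ++ [a] ∈ 𝓛 } be the effective supervisor for 𝓛. Then for any set K ⊆ List A satisfying the supervised-language recursion for Π_𝓛 ([] ∈ K, and for all l and a, l ++ [a] ∈ K ↔ (l ∈ K ∧ a ∈ Π_𝓛(l))), the language generated by the product of H with the environment, namely { l | δ_h*(h₀, l) ≠ none }, equals K. -/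
/-- Realization of the supervisor by an automaton (generated
language): if the language generated by the specification automaton H equals a
prefix-closed language 𝓛, then the language generated by the product of H with
the (total) environment equals the supervised language for the effective
supervisor of 𝓛. -/
theorem supervisor_realization_generated
    {S A Sh : Type*} [Fintype S] [Fintype A] [Nonempty A]
    (s₀ : S) (δ : S → A → S)
    (h₀ : Sh) (δh : Sh → A → Option Sh)
    (extH : Sh → List A → Option Sh)
    (hextnil : ∀ h : Sh, extH h [] = some h)
    (hextsnoc : ∀ (h : Sh) (l : List A) (a : A),
      extH h (l ++ [a]) = (extH h l).bind (fun h' => δh h' a))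
    (𝓛 : Set (List A))
    (hpc : ∀ l ∈ 𝓛, ∀ p : List A, p <+: l → p ∈ 𝓛)
    (hLH : {l : List A | extH h₀ l ≠ none} = 𝓛)
    (K : Set (List A))
    (hKnil : [] ∈ K)
    (hKrec : ∀ (l : List A) (a : A),
      l ++ [a] ∈ K ↔ (l ∈ K ∧ a ∈ {b : A | l ++ [b] ∈ 𝓛})) :
    {l : List A | extH h₀ l ≠ none} = K := by
  rw [hLH]
  ext l
  induction l using List.reverseRecOn with
  | nil =>
    simp only [hKnil, iff_true]
    have : [] ∈ {l : List A | extH h₀ l ≠ none} := by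
      simp [hextnil]
    rwa [hLH] at this
  | append_singleton l a ih =>
    rw [hKrec]
    constructor
    · intro h
      exact ⟨ih.mp (hpc _ h l ⟨[a], rfl⟩), h⟩
    · exact fun h => h.2
end

section
/- Realization of the supervisor by an automaton (marked language): let H be a specification automaton, all of whose states are marked, whose generated language L(H) = { l | δ_h*(h₀, l) ≠ none } equals a prefix-closed language 𝓛, and let Π_𝓛(l) = { a | l ++ [a] ∈ 𝓛 } be the effective supervisor for 𝓛. Then for any set K ⊆ List A satisfying the supervised-language recursion for Π_𝓛, the marked language of the product of H with the environment, namely { l | δ_h*(h₀, l) ≠ none ∧ δ*(s₀, l) ∈ M }, equals K ∩ { l | δ*(s₀, l) ∈ M }. -/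
/-- Realization of the supervisor by an automaton (marked
language): if all states of H are marked and L(H) equals a prefix-closed
language 𝓛, then the marked language of the product of H with the environment
equals the supervised language intersected with the marked language of the
environment. -/
theorem supervisor_realization_marked
    {S A Sh : Type*} [Fintype S] [Fintype A] [Nonempty A]
    (s₀ : S) (δ : S → A → S) (M : Set S)
    (h₀ : Sh) (δh : Sh → A → Option Sh)
    (extH : Sh → List A → Option Sh)
    (hextnil : ∀ h : Sh, extH h [] = some h)
    (hextsnoc : ∀ (h : Sh) (l : List A) (a : A),
      extH h (l ++ [a]) = (extH h l).bind (fun h' => δh h' a))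
    (𝓛 : Set (List A))
    (hpc : ∀ l ∈ 𝓛, ∀ p : List A, p <+: l → p ∈ 𝓛)
    (hLH : {l : List A | extH h₀ l ≠ none} = 𝓛)
    (K : Set (List A))
    (hKnil : [] ∈ K)
    (hKrec : ∀ (l : List A) (a : A),
      l ++ [a] ∈ K ↔ (l ∈ K ∧ a ∈ {b : A | l ++ [b] ∈ 𝓛})) :
    {l : List A | extH h₀ l ≠ none ∧ l.foldl δ s₀ ∈ M} =
      K ∩ {l : List A | l.foldl δ s₀ ∈ M} := by
  have hnil𝓛 : ([] : List A) ∈ 𝓛 := by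
    rw [← hLH]; simp [hextnil]
  have key : ∀ l : List A, l ∈ K ↔ l ∈ 𝓛 := by
    intro l
    induction l using List.reverseRecOn with
    | nil => exact ⟨fun _ => hnil𝓛, fun _ => hKnil⟩
    | append_singleton l a ih =>
      rw [hKrec]
      constructor
      · rintro ⟨-, h⟩; exact h
      · intro h
        exact ⟨ih.mpr (hpc _ h l ⟨[a], rfl⟩), h⟩
  ext l
  simp only [Set.mem_setOf_eq, Set.mem_inter_iff, key, ← hLH, Set.mem_setOf_eq]
end

section
/- Characterization of the behavior under an effective supervisor: let 𝓛 ⊆ List A be a nonempty prefix-closed language, let Π_𝓛(l) = { a | l ++ [a] ∈ 𝓛 } be the effective supervisor for 𝓛, and suppose π_b(s, a) > 0 for every state s and action a. Then for every string l, Lps(l) > 0 if and only if l ∈ 𝓛, where Lps is the supervised probabilistic language for Π_𝓛. -/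
open scoped Classical

/-- Characterization of the behavior under an effective
supervisor: with an everywhere-positive behavior policy and a nonempty
prefix-closed language 𝓛, a string has strictly positive supervised probability
(under the effective supervisor for 𝓛) if and only if it belongs to 𝓛. -/
theorem Lps_pos_iff_mem
    {S A : Type*} [Fintype S] [Fintype A] [Nonempty A]
    (s₀ : S) (δ : S → A → S)
    (πb : S → A → ℝ) (hπ : ∀ s a, 0 < πb s a)
    (𝓛 : Set (List A)) (hne : 𝓛.Nonempty)
    (hpc : ∀ l ∈ 𝓛, ∀ p : List A, p <+: l → p ∈ 𝓛)
    (Lps : List A → ℝ)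
    (hLpsnil : Lps [] = 1)
    (hLpssnoc : ∀ (l : List A) (a : A),
      Lps (l ++ [a]) =
        Lps l * πb (l.foldl δ s₀) a *
          (if a ∈ {b : A | l ++ [b] ∈ 𝓛} then 1 else 0)) :
    ∀ l : List A, Lps l > 0 ↔ l ∈ 𝓛 := by
  have hnil : ([] : List A) ∈ 𝓛 := by
    obtain ⟨w, hw⟩ := hne
    exact hpc w hw [] List.nil_prefix
  intro l
  induction l using List.reverseRecOn with
  | nil => simp [hLpsnil, hnil]
  | append_singleton l a ih =>
    rw [hLpssnoc]
    constructor
    · intro h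
      by_contra hmem
      simp [Set.mem_setOf_eq, hmem] at h
    · intro hmem
      have hl : l ∈ 𝓛 := hpc _ hmem l ⟨[a], rfl⟩
      have := ih.mpr hl
      simp only [Set.mem_setOf_eq, hmem, if_true, mul_one]
      exact mul_pos this (hπ _ _)
end

section
/- Main theorem (optimality preservation): let 𝓛 ⊆ List A be a nonempty prefix-closed language, let Π_𝓛(l) = { a | l ++ [a] ∈ 𝓛 } be the effective supervisor for 𝓛, let Lps be the supervised probabilistic language for Π_𝓛, and suppose π_b(s, a) > 0 for every state s and action a. Then the effective supervisor is optimality-preserving (i.e., for every non-marked state s ∈ S \ M and every action a ∈ A there exists a string l with δ*(s₀, l) = s and Lps(l ++ [a]) > 0) if and only if 𝓛 covers the environment (i.e., for every non-marked state s ∈ S \ M and every action a ∈ A there exists a string l with δ*(s₀, l) = s, l ∈ 𝓛, and l ++ [a] ∈ 𝓛). -/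
open scoped Classical

/-- Main theorem (optimality preservation): the effective
supervisor for a nonempty prefix-closed language 𝓛 is optimality-preserving if
and only if 𝓛 covers the environment. -/
theorem optimality_preserving_iff_covers
    {S A : Type*} [Fintype S] [Fintype A] [Nonempty A]
    (s₀ : S) (δ : S → A → S) (M : Set S)
    (πb : S → A → ℝ) (hπ : ∀ s a, 0 < πb s a)
    (𝓛 : Set (List A)) (hne : 𝓛.Nonempty)
    (hpc : ∀ l ∈ 𝓛, ∀ p : List A, p <+: l → p ∈ 𝓛)
    (Lps : List A → ℝ)
    (hLpsnil : Lps [] = 1)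
    (hLpssnoc : ∀ (l : List A) (a : A),
      Lps (l ++ [a]) =
        Lps l * πb (l.foldl δ s₀) a *
          (if a ∈ {b : A | l ++ [b] ∈ 𝓛} then 1 else 0)) :
    (∀ s ∉ M, ∀ a : A, ∃ l : List A,
        l.foldl δ s₀ = s ∧ Lps (l ++ [a]) > 0) ↔
      (∀ s ∉ M, ∀ a : A, ∃ l : List A,
        l.foldl δ s₀ = s ∧ l ∈ 𝓛 ∧ l ++ [a] ∈ 𝓛) := by
  have hnil : ([] : List A) ∈ 𝓛 := by
    obtain ⟨l, hl⟩ := hne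
    exact hpc l hl [] ⟨l, rfl⟩
  have key : ∀ l : List A, 0 < Lps l ↔ l ∈ 𝓛 := by
    intro l
    induction l using List.reverseRecOn with
    | nil => simp [hLpsnil, hnil]
    | append_singleton l a ih =>
      rw [hLpssnoc]
      by_cases h : l ++ [a] ∈ 𝓛
      · have hl : l ∈ 𝓛 := hpc _ h l ⟨[a], rfl⟩
        have hpos := ih.mpr hl
        have := hπ (l.foldl δ s₀) a
        rw [if_pos (show a ∈ {b : A | l ++ [b] ∈ 𝓛} from h), mul_one]
        exact ⟨fun _ => h, fun _ => mul_pos hpos this⟩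
      · simp [Set.mem_setOf_eq, h]
  constructor
  · intro H s hs a
    obtain ⟨l, hl1, hl2⟩ := H s hs a
    have h2 : l ++ [a] ∈ 𝓛 := (key _).mp hl2
    exact ⟨l, hl1, hpc _ h2 l ⟨[a], rfl⟩, h2⟩
  · intro H s hs a
    obtain ⟨l, hl1, _, h3⟩ := H s hs a
    exact ⟨l, hl1, (key _).mpr h3⟩
end

section
/- Sufficient condition for covering: if every non-marked state of the environment is visitable with respect to the product H‖G — that is, for every s ∈ S \ M, the union over all h ∈ S_h such that (h, s) is reachable in the product of the active sets { a | δ_h(h, a) is defined } equals all of A — then the language L(H) generated by the specification automaton H covers the environment: for every non-marked state s ∈ S \ M and every action a ∈ A there exists a string l with δ*(s₀, l) = s, l ∈ L(H), and l ++ [a] ∈ L(H). -/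
/-- Sufficient condition for covering: if every non-marked state
of the environment is visitable with respect to the product H‖G, then the
language L(H) generated by the specification automaton H covers the
environment. -/
theorem covers_of_visitable
    {S A Sh : Type*} [Fintype S] [Fintype A] [Nonempty A]
    (s₀ : S) (δ : S → A → S) (M : Set S)
    (h₀ : Sh) (δh : Sh → A → Option Sh)
    (extH : Sh → List A → Option Sh)
    (hextnil : ∀ h : Sh, extH h [] = some h)
    (hextsnoc : ∀ (h : Sh) (l : List A) (a : A),
      extH h (l ++ [a]) = (extH h l).bind (fun h' => δh h' a))
    (hvisit : ∀ s ∉ M,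
      (⋃ h ∈ {h : Sh | ∃ l : List A,
          extH h₀ l = some h ∧ l.foldl δ s₀ = s},
        {a : A | δh h a ≠ none}) = (Set.univ : Set A)) :
    ∀ s ∉ M, ∀ a : A, ∃ l : List A,
      l.foldl δ s₀ = s ∧
      extH h₀ l ≠ none ∧ extH h₀ (l ++ [a]) ≠ none := by
  intro s hs a
  have := hvisit s hs
  have ha : a ∈ (⋃ h ∈ {h : Sh | ∃ l : List A,
      extH h₀ l = some h ∧ l.foldl δ s₀ = s}, {a : A | δh h a ≠ none}) := by
    rw [this]; trivial
  simp only [Set.mem_iUnion, Set.mem_setOf_eq] at ha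
  obtain ⟨h, ⟨l, hl1, hl2⟩, hda⟩ := ha
  refine ⟨l, hl2, ?_, ?_⟩
  · rw [hl1]; simp
  · rw [hextsnoc, hl1]; simpa using hda
end
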